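/- arXiv:1809.08900 — 2 statements merged into one kernel-verified Lean document; each statement's English description precedes it below -/
import Mathlib

section
/- Let G and H be nontrivial graphs such that neither G nor H belongs to the class 𝒢. Then edim(G ∨ H) = |V(G)| + |V(H)| - 2. -/
open SimpleGraph

variable {V W : Type*}

/-- Distance (in `ℕ∞`) from a vertex to an edge: the minimum of the distances
to the two endpoints. -/
noncomputable def edgeDist (G : SimpleGraph V) (v : V) (e : Sym2 V) : ℕ∞ :=
  Sym2.lift ⟨fun a b => min (G.edist v a) (G.edist v b),
    fun a b => min_comm _ _⟩ e

/-- A set of vertices is an edge metric generator if every pair of distinct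
edges is distinguished by some vertex of the set. -/
def IsEdgeMetricGenerator (G : SimpleGraph V) (S : Set V) : Prop :=
  ∀ e₁ ∈ G.edgeSet, ∀ e₂ ∈ G.edgeSet, e₁ ≠ e₂ →
    ∃ w ∈ S, edgeDist G w e₁ ≠ edgeDist G w e₂

/-- The edge metric dimension: minimum cardinality of an edge metric generator. -/
noncomputable def edim (G : SimpleGraph V) : ℕ :=
  sInf {n | ∃ S : Set V, S.ncard = n ∧ IsEdgeMetricGenerator G S}


/-- The join of two graphs: disjoint union plus all edges across. -/
def joinGraph (G : SimpleGraph V) (H : SimpleGraph W) : SimpleGraph (V ⊕ W) where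
  Adj x y := match x, y with
    | .inl a, .inl b => G.Adj a b
    | .inr a, .inr b => H.Adj a b
    | .inl _, .inr _ => True
    | .inr _, .inl _ => True
  symm := by constructor; rintro (a | a) (b | b) h <;> simp_all [SimpleGraph.adj_comm]
  loopless := by
    constructor
    rintro (a | a) h
    · exact G.loopless.irrefl a h
    · exact H.loopless.irrefl a h

/-- A total dominating set: every vertex has a neighbor in the set. -/
def IsTotalDomSet (G : SimpleGraph V) (D : Set V) : Prop :=
  ∀ v : V, ∃ d ∈ D, G.Adj v d

/-- The total domination number. -/
noncomputable def totalDomNum (G : SimpleGraph V) : ℕ :=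
  sInf {n | ∃ D : Set V, D.ncard = n ∧ IsTotalDomSet G D}

/-- The class 𝒢: for every vertex `u` there is a neighbor `v`
such that `{u, v}` is a minimum total dominating set. -/
def InClassG (G : SimpleGraph V) : Prop :=
  ∀ u : V, ∃ v : V, G.Adj u v ∧ IsTotalDomSet G {u, v} ∧
    ({u, v} : Set V).ncard = totalDomNum G

/-- Lexicographic product `G[H]`. -/
def lexProd (G : SimpleGraph V) (H : SimpleGraph W) : SimpleGraph (V × W) where
  Adj x y := G.Adj x.1 y.1 ∨ (x.1 = y.1 ∧ H.Adj x.2 y.2)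
  symm := by constructor; rintro ⟨g, h⟩ ⟨g', h'⟩ (hadj | ⟨rfl, hadj⟩)
             · exact Or.inl hadj.symm
             · exact Or.inr ⟨rfl, hadj.symm⟩
  loopless := by constructor; rintro ⟨g, h⟩ (hadj | ⟨-, hadj⟩)
                 · exact G.loopless.irrefl g hadj
                 · exact H.loopless.irrefl h hadj

/-- Corona product `G ⊙ H`: vertex `(g, none)` is the vertex `g` of `G`, and
`(g, some h)` is the vertex `h` of the copy of `H` attached to `g`. -/
def corona (G : SimpleGraph V) (H : SimpleGraph W) : SimpleGraph (V × Option W) where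
  Adj x y := match x, y with
    | (g, none), (g', none) => G.Adj g g'
    | (g, none), (g', some _) => g = g'
    | (g, some _), (g', none) => g = g'
    | (g, some h), (g', some h') => g = g' ∧ H.Adj h h'
  symm := by constructor; rintro ⟨g, (_ | h)⟩ ⟨g', (_ | h')⟩ hadj <;>
             simp_all [SimpleGraph.adj_comm, eq_comm]
  loopless := by constructor; rintro ⟨g, (_ | h)⟩ hadj <;> simp_all

/-- The closed neighborhood of a vertex. -/
def closedNbhd (G : SimpleGraph V) (u : V) : Set V :=
  insert u (G.neighborSet u)

/-- `u` and `v` are false twins: equal open neighborhoods. -/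
def FalseTwin (G : SimpleGraph V) (u v : V) : Prop :=
  G.neighborSet u = G.neighborSet v

/-- `u` and `v` are true twins: equal closed neighborhoods. -/
def TrueTwin (G : SimpleGraph V) (u v : V) : Prop :=
  closedNbhd G u = closedNbhd G v

/-- The union of the closed neighborhoods of the two endpoints of an edge. -/
def edgeNbhd (G : SimpleGraph V) : Sym2 V → Set V :=
  Sym2.lift ⟨fun a b => closedNbhd G a ∪ closedNbhd G b, fun _ _ => Set.union_comm _ _⟩

/-- Two edges are twin edges: `N[u] ∪ N[v] = N[x] ∪ N[y]`. -/
def TwinEdges (G : SimpleGraph V) (e f : Sym2 V) : Prop :=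
  edgeNbhd G e = edgeNbhd G f

/-- The set of edges lying in nontrivial edge-twin classes. -/
def nontrivTwinEdges (G : SimpleGraph V) : Set (Sym2 V) :=
  {e ∈ G.edgeSet | ∃ f ∈ G.edgeSet, f ≠ e ∧ TwinEdges G e f}

/-- `q(G)`: the number of edges lying in nontrivial edge-twin classes. -/
noncomputable def qval (G : SimpleGraph V) : ℕ := (nontrivTwinEdges G).ncard

/-- `q'(G) = q(G) - m`, where `m` is the number of nontrivial edge-twin classes. -/
noncomputable def q'val (G : SimpleGraph V) : ℕ :=
  qval G - (edgeNbhd G '' nontrivTwinEdges G).ncard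

/-- The set of vertices lying in nontrivial false-twin classes. -/
def nontrivFalseTwins (G : SimpleGraph V) : Set V :=
  {v | ∃ u, u ≠ v ∧ FalseTwin G u v}

/-- The set of vertices lying in nontrivial true-twin classes. -/
def nontrivTrueTwins (G : SimpleGraph V) : Set V :=
  {v | ∃ u, u ≠ v ∧ TrueTwin G u v}

/-- `f'(G) = f(G) - k`: vertices in nontrivial false-twin classes minus the
number of such classes. -/
noncomputable def f'val (G : SimpleGraph V) : ℕ :=
  (nontrivFalseTwins G).ncard - (G.neighborSet '' nontrivFalseTwins G).ncard

/-- `t'(G) = t(G) - ℓ`: vertices in nontrivial true-twin classes minus the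
number of such classes. -/
noncomputable def t'val (G : SimpleGraph V) : ℕ :=
  (nontrivTrueTwins G).ncard - (closedNbhd G '' nontrivTrueTwins G).ncard

/-- A set of representatives for the twin deletion operation: it contains
exactly one vertex from each (false- or true-) twin equivalence class. -/
def IsTwinDeletionSet (G : SimpleGraph V) (R : Set V) : Prop :=
  ∀ v : V, ∃! r : V, r ∈ R ∧ (FalseTwin G v r ∨ TrueTwin G v r)

/-!
An edge metric generator of `G ∨ H` misses at most one vertex on each side: two edges from
distinct `a, a' ∈ V` to a common `w ∈ W` are at distance 1 from every vertex other than
`a, a', w`. Conversely, `G ∉ 𝒢` yields a vertex `g` such that no edge `gc` totally dominates `G`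
(for a single edge, being a total dominating set already forces minimality), and likewise `h`
for `H`. All vertices but `g` and `h` then form a generator: two distinct edges that are not
separated by one of their own endpoints must be `gz` and `hz` for a common neighbour `z`, and a
vertex on `z`'s side dominated by neither `g` nor `z` (resp. `h` and `z`) is at distance 1 from
one of them and at distance at least 2 from the other.
-/

section EdgeDist

variable {G : SimpleGraph V} {v : V} {e f : Sym2 V}

lemma edgeDist_eq_zero_iff : edgeDist G v e = 0 ↔ v ∈ e := by
  induction e using Sym2.ind
  rw [← bot_eq_zero', edgeDist, Sym2.lift_mk, min_eq_bot, bot_eq_zero',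
    edist_eq_zero_iff, edist_eq_zero_iff, Sym2.mem_iff]

lemma edgeDist_le_one_iff : edgeDist G v e ≤ 1 ↔ ∃ a ∈ e, G.Adj v a ∨ v = a := by
  induction e using Sym2.ind
  simp [edgeDist, edist_le_one_iff_adj_or_eq]

lemma edgeDist_eq_one_iff : edgeDist G v e = 1 ↔ v ∉ e ∧ ∃ a ∈ e, G.Adj v a := by
  have : edgeDist G v e = 1 ↔ edgeDist G v e ≤ 1 ∧ edgeDist G v e ≠ 0 := by
    rw [← Order.one_le_iff_ne_zero, le_antisymm_iff]
  rw [this, edgeDist_le_one_iff, Ne, edgeDist_eq_zero_iff]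
  grind

lemma edgeDist_ne_of_adj {a : V} (hvf : v ∉ f) (ha : a ∈ f) (hva : G.Adj v a)
    (he : ∀ b ∈ e, ¬ G.Adj v b) : edgeDist G v e ≠ edgeDist G v f := by
  rw [edgeDist_eq_one_iff.2 ⟨hvf, a, ha, hva⟩, Ne, edgeDist_eq_one_iff]
  exact fun ⟨_, b, hb, hvb⟩ => he b hb hvb

end EdgeDist

section TotalDomination

variable {G : SimpleGraph V}

lemma IsTotalDomSet.two_le_ncard [Finite V] [Nonempty V] {D : Set V} (hD : IsTotalDomSet G D) :
    2 ≤ D.ncard := by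
  obtain ⟨v⟩ := ‹Nonempty V›
  obtain ⟨d, hdD, -⟩ := hD v
  obtain ⟨d', hd'D, hdd'⟩ := hD d
  exact (Set.ncard_pair hdd'.ne).ge.trans (Set.ncard_le_ncard (Set.pair_subset hdD hd'D))

lemma totalDomNum_eq_two [Finite V] {u v : V} (huv : G.Adj u v) (hD : IsTotalDomSet G {u, v}) :
    totalDomNum G = 2 := by
  have : Nonempty V := ⟨u⟩
  refine IsLeast.csInf_eq ⟨⟨_, Set.ncard_pair huv.ne, hD⟩, ?_⟩
  rintro _ ⟨D, rfl, hD⟩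
  exact hD.two_le_ncard

lemma not_inClassG_iff [Finite V] :
    ¬ InClassG G ↔ ∃ u, ∀ v, G.Adj u v → ¬ IsTotalDomSet G {u, v} := by
  simp only [InClassG, not_forall, not_exists, not_and]
  refine exists_congr fun u => forall_congr' fun v => imp_congr_right fun huv => ?_
  refine ⟨fun h hD => h hD ?_, fun h hD => absurd hD h⟩
  rw [Set.ncard_pair huv.ne, totalDomNum_eq_two huv hD]

lemma not_isTotalDomSet_pair_iff {u v : V} :
    ¬ IsTotalDomSet G {u, v} ↔ ∃ x, ¬ G.Adj x u ∧ ¬ G.Adj x v := by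
  simp [IsTotalDomSet]

end TotalDomination

lemma exists_common_endpoint_of_agree_off_pair {p q r s t₁ t₂ : V} (hpq : p ≠ q) (hrs : r ≠ s)
    (hne : s(p, q) ≠ s(r, s)) (h : ∀ w, w ≠ t₁ → w ≠ t₂ → (w ∈ s(p, q) ↔ w ∈ s(r, s))) :
    ∃ z, s(p, q) = s(t₁, z) ∧ s(r, s) = s(t₂, z) ∨ s(p, q) = s(t₂, z) ∧ s(r, s) = s(t₁, z) := by
  have hp := h p; have hq := h q; have hr := h r; have hs := h s
  simp only [Sym2.mem_iff, Sym2.eq_iff, ne_eq, true_or, or_true, true_iff, iff_true] at *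
  by_cases hp' : p = r ∨ p = s
  · exact ⟨p, by grind⟩
  · refine ⟨q, ?_⟩
    rcases eq_or_ne p t₁ with rfl | h1 <;> rcases eq_or_ne q t₂ with rfl | h2 <;> grind

section EdgeMetricGenerator

variable {G : SimpleGraph V} {S : Set V}

lemma IsEdgeMetricGenerator.mem_or_mem (hS : IsEdgeMetricGenerator G S) {a a' w : V}
    (ha : G.Adj a w) (ha' : G.Adj a' w) (hne : a ≠ a')
    (hcover : ∀ z, z ≠ a → z ≠ a' → z ≠ w → G.Adj z w ∨ G.Adj z a ∧ G.Adj z a') :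
    a ∈ S ∨ a' ∈ S := by
  by_contra! h
  obtain ⟨z, hzS, hz⟩ := hS s(a, w) ha s(a', w) ha' (by simp [hne, ha.ne])
  have hza : z ≠ a := ne_of_mem_of_not_mem hzS h.1
  have hza' : z ≠ a' := ne_of_mem_of_not_mem hzS h.2
  rcases eq_or_ne z w with rfl | hzw
  · rw [edgeDist_eq_zero_iff.2 (Sym2.mem_mk_right _ _),
      edgeDist_eq_zero_iff.2 (Sym2.mem_mk_right _ _)] at hz
    exact hz rfl
  · have hone : ∀ b, z ≠ b → G.Adj z w ∨ G.Adj z b → edgeDist G z s(b, w) = 1 :=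
      fun b hzb hadj => edgeDist_eq_one_iff.2 ⟨by simp [hzb, hzw], by simpa [or_comm] using hadj⟩
    apply hz
    rcases hcover z hza hza' hzw with hzw' | ⟨hzb, hzb'⟩
    · rw [hone a hza (.inl hzw'), hone a' hza' (.inl hzw')]
    · rw [hone a hza (.inr hzb), hone a' hza' (.inr hzb')]

lemma isEdgeMetricGenerator_compl_pair {t₁ t₂ : V}
    (h : ∀ z, G.Adj t₁ z → G.Adj t₂ z →
      ∃ w ∉ ({t₁, t₂} : Set V), edgeDist G w s(t₁, z) ≠ edgeDist G w s(t₂, z)) :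
    IsEdgeMetricGenerator G {t₁, t₂}ᶜ := by
  intro e₁ he₁ e₂ he₂ hne
  by_contra! hagree
  have hmem : ∀ w, w ≠ t₁ → w ≠ t₂ → (w ∈ e₁ ↔ w ∈ e₂) := fun w hw₁ hw₂ => by
    rw [← edgeDist_eq_zero_iff, ← edgeDist_eq_zero_iff, hagree w (by simp [hw₁, hw₂])]
  induction e₁ using Sym2.ind with | _ p q =>
  induction e₂ using Sym2.ind with | _ r s =>
  obtain ⟨z, ⟨h₁, h₂⟩ | ⟨h₁, h₂⟩⟩ :=
    exists_common_endpoint_of_agree_off_pair he₁.ne he₂.ne hne hmem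
  · rw [h₁] at he₁ hagree; rw [h₂] at he₂ hagree
    obtain ⟨w, hw, hd⟩ := h z he₁ he₂
    exact hd (hagree w hw)
  · rw [h₁] at he₁ hagree; rw [h₂] at he₂ hagree
    obtain ⟨w, hw, hd⟩ := h z he₂ he₁
    exact hd (hagree w hw).symm

end EdgeMetricGenerator

section Join

variable {G : SimpleGraph V} {H : SimpleGraph W}

@[simp] lemma joinGraph_adj_inl_inl {a b : V} :
    (joinGraph G H).Adj (.inl a) (.inl b) ↔ G.Adj a b := .rfl

@[simp] lemma joinGraph_adj_inr_inr {a b : W} :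
    (joinGraph G H).Adj (.inr a) (.inr b) ↔ H.Adj a b := .rfl

@[simp] lemma joinGraph_adj_inl_inr {a : V} {b : W} : (joinGraph G H).Adj (.inl a) (.inr b) :=
  trivial

@[simp] lemma joinGraph_adj_inr_inl {a : W} {b : V} : (joinGraph G H).Adj (.inr a) (.inl b) :=
  trivial

lemma IsEdgeMetricGenerator.joinGraph_ncard_compl_le_two [Finite V] [Finite W] [Nonempty V]
    [Nonempty W] {S : Set (V ⊕ W)} (hS : IsEdgeMetricGenerator (joinGraph G H) S) :
    Sᶜ.ncard ≤ 2 := by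
  obtain ⟨v₀⟩ := ‹Nonempty V›
  obtain ⟨w₀⟩ := ‹Nonempty W›
  have hl : (Sum.inl ⁻¹' Sᶜ : Set V).Subsingleton := fun a ha a' ha' => by
    by_contra hne
    refine (hS.mem_or_mem (a := .inl a) (a' := .inl a') (w := .inr w₀) trivial trivial
      (by simpa using hne) ?_).elim ha ha'
    rintro (z | z) - - hz <;> simp_all
  have hr : (Sum.inr ⁻¹' Sᶜ : Set W).Subsingleton := fun a ha a' ha' => by
    by_contra hne
    refine (hS.mem_or_mem (a := .inr a) (a' := .inr a') (w := .inl v₀) trivial trivial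
      (by simpa using hne) ?_).elim ha ha'
    rintro (z | z) - - hz <;> simp_all
  rw [← Set.image_preimage_inl_union_image_preimage_inr Sᶜ]
  calc _ ≤ (Sum.inl '' (Sum.inl ⁻¹' Sᶜ)).ncard + (Sum.inr '' (Sum.inr ⁻¹' Sᶜ)).ncard :=
        Set.ncard_union_le _ _
    _ ≤ 1 + 1 := add_le_add (Set.ncard_le_one_iff_subsingleton.2 (hl.image _))
        (Set.ncard_le_one_iff_subsingleton.2 (hr.image _))

lemma isEdgeMetricGenerator_joinGraph_compl_pair {g : V} {h : W}
    (hg : ∀ c, G.Adj g c → ¬ IsTotalDomSet G {g, c})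
    (hh : ∀ c, H.Adj h c → ¬ IsTotalDomSet H {h, c}) :
    IsEdgeMetricGenerator (joinGraph G H) {.inl g, .inr h}ᶜ := by
  refine isEdgeMetricGenerator_compl_pair fun z hgz hhz => ?_
  rcases z with c | c
  · obtain ⟨x, hxg, hxc⟩ := not_isTotalDomSet_pair_iff.1 (hg c hgz)
    have hxg' : x ≠ g := fun hx => hxc (hx ▸ hgz)
    have hxc' : x ≠ c := fun hx => hxg (hx ▸ hgz.symm)
    refine ⟨.inl x, by simpa using hxg',
      edgeDist_ne_of_adj (a := Sum.inr h) (by simpa using hxc') (Sym2.mem_mk_left _ _) trivial ?_⟩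
    simpa using ⟨hxg, hxc⟩
  · obtain ⟨y, hyh, hyc⟩ := not_isTotalDomSet_pair_iff.1 (hh c hhz)
    have hyh' : y ≠ h := fun hy => hyc (hy ▸ hhz)
    have hyc' : y ≠ c := fun hy => hyh (hy ▸ hhz.symm)
    refine ⟨.inr y, by simpa using hyh', (edgeDist_ne_of_adj (a := Sum.inl g)
      (by simpa using hyc') (Sym2.mem_mk_left _ _) trivial ?_).symm⟩
    simpa using ⟨hyh, hyc⟩

end Join

theorem edim_join_of_not_classG_general {V W : Type*} [Fintype V] [Fintype W]
    (G : SimpleGraph V) (H : SimpleGraph W)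
    (hGc : ¬ InClassG G) (hHc : ¬ InClassG H) :
    edim (joinGraph G H) = Fintype.card V + Fintype.card W - 2 := by
  obtain ⟨g, hg⟩ := not_inClassG_iff.1 hGc
  obtain ⟨h, hh⟩ := not_inClassG_iff.1 hHc
  have : Nonempty V := ⟨g⟩
  have : Nonempty W := ⟨h⟩
  have hcard (S : Set (V ⊕ W)) : S.ncard + Sᶜ.ncard = Fintype.card V + Fintype.card W := by
    rw [Set.ncard_add_ncard_compl, Nat.card_eq_fintype_card, Fintype.card_sum]
  refine IsLeast.csInf_eq ⟨⟨_, ?_, isEdgeMetricGenerator_joinGraph_compl_pair hg hh⟩, ?_⟩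
  · have := hcard {.inl g, .inr h}
    rw [Set.ncard_pair Sum.inl_ne_inr] at this
    omega
  · rintro _ ⟨S, rfl, hS⟩
    have := hcard S
    have := hS.joinGraph_ncard_compl_le_two
    omega

theorem edim_join_of_not_classG {V W : Type*} [Fintype V] [Fintype W]
    (G : SimpleGraph V) (H : SimpleGraph W)
    (hG : 2 ≤ Fintype.card V) (hH : 2 ≤ Fintype.card W)
    (hGc : ¬ InClassG G) (hHc : ¬ InClassG H) :
    edim (joinGraph G H) = Fintype.card V + Fintype.card W - 2 :=
  edim_join_of_not_classG_general G H hGc hHc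
end

section
/- Let G and H be graphs where the twin-deletion operation is applied to G in two possibly different ways: G' and G'' are each obtained from G by deleting all but one vertex from every nontrivial equivalence class of the false-twin relation and of the true-twin relation. Then the number q of edges in nontrivial edge-twin equivalence classes and the quantity q' (that number minus the number of such classes) agree: q(G') = q(G'') and q'(G') = q'(G''). -/
open SimpleGraph

variable {V W : Type*}

/-!
Call `u` and `v` twins when they are false twins or true twins. This is an equivalence relation:
a false twin `u` and a true twin `w` of the same vertex `v` cannot both differ from `v`, since
`w ∈ N(v) = N(u)` forces `u ∈ N[w] = N[v]`, so `u` would be adjacent to itself. A twin-deletion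
set is a transversal of this relation, and a vertex that is not a twin of `w` is adjacent to `w`
exactly when its twins are. Hence sending each vertex of `R` to its twin in `R'` is an isomorphism
`G[R] ≃g G[R']`, and `q`, `q'` are isomorphism invariants.
-/

variable {G : SimpleGraph V} {u v w : V}

theorem FalseTwin.not_adj (h : FalseTwin G u v) : ¬ G.Adj u v := fun huv =>
  G.loopless.irrefl v (show v ∈ G.neighborSet v by rw [← h]; exact huv)

theorem TrueTwin.adj_of_ne (h : TrueTwin G u v) (hne : u ≠ v) : G.Adj u v := by
  have hv : v ∈ closedNbhd G u := h ▸ Set.mem_insert v _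
  exact (Set.mem_insert_iff.mp hv).resolve_left hne.symm

theorem FalseTwin.eq_or_eq_of_trueTwin (h₁ : FalseTwin G u v) (h₂ : TrueTwin G v w) :
    u = v ∨ v = w := by
  by_contra! hne
  have huw : G.Adj u w := show w ∈ G.neighborSet u from h₁ ▸ h₂.adj_of_ne hne.2
  have hu : u ∈ closedNbhd G v := h₂ ▸ Set.mem_insert_of_mem w huw.symm
  exact h₁.not_adj ((Set.mem_insert_iff.mp hu).resolve_left hne.1).symm

def IsTwin (G : SimpleGraph V) (u v : V) : Prop :=
  FalseTwin G u v ∨ TrueTwin G u v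

namespace IsTwin

theorem refl (G : SimpleGraph V) (u : V) : IsTwin G u u := Or.inl rfl

theorem symm (h : IsTwin G u v) : IsTwin G v u := h.imp Eq.symm Eq.symm

theorem of_falseTwin_of_trueTwin (h₁ : FalseTwin G u v) (h₂ : TrueTwin G v w) :
    IsTwin G u w := by
  rcases h₁.eq_or_eq_of_trueTwin h₂ with rfl | rfl
  · exact Or.inr h₂
  · exact Or.inl h₁

theorem trans (h₁ : IsTwin G u v) (h₂ : IsTwin G v w) : IsTwin G u w := by
  rcases h₁ with h₁ | h₁ <;> rcases h₂ with h₂ | h₂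
  · exact Or.inl (h₁.trans h₂)
  · exact of_falseTwin_of_trueTwin h₁ h₂
  · exact (of_falseTwin_of_trueTwin h₂.symm h₁.symm).symm
  · exact Or.inr (h₁.trans h₂)

theorem adj_or_eq (h : IsTwin G u v) (hw : G.Adj u w) : G.Adj v w ∨ v = w := by
  rcases h with h | h
  · exact Or.inl (show w ∈ G.neighborSet v from h ▸ hw)
  · have hw' : w ∈ closedNbhd G v := h ▸ Set.mem_insert_of_mem u hw
    exact (Set.mem_insert_iff.mp hw').symm.imp id Eq.symm

theorem adj_iff (h : IsTwin G u v) (hw : ¬ IsTwin G u w) : G.Adj u w ↔ G.Adj v w := by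
  have adj_of {a b : V} (hab : IsTwin G a b) (hbw : ¬ IsTwin G b w) (haw : G.Adj a w) :
      G.Adj b w :=
    (hab.adj_or_eq haw).resolve_right fun hb => hbw (hb ▸ refl G b)
  exact ⟨adj_of h fun hvw => hw (h.trans hvw), adj_of h.symm hw⟩

theorem adj_congr {u' v' : V} (hu : IsTwin G u u') (hv : IsTwin G v v') (huv : ¬ IsTwin G u v) :
    G.Adj u v ↔ G.Adj u' v' := by
  have hu'v : ¬ IsTwin G v u' := fun h => huv (hu.trans h.symm)
  rw [hu.adj_iff huv, G.adj_comm, hv.adj_iff hu'v, G.adj_comm]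

end IsTwin

namespace IsTwinDeletionSet

variable {R R' : Set V}

noncomputable def rep (hR : IsTwinDeletionSet G R) (v : V) : V := (hR v).choose

theorem rep_mem (hR : IsTwinDeletionSet G R) (v : V) : hR.rep v ∈ R :=
  (hR v).choose_spec.1.1

theorem isTwin_rep (hR : IsTwinDeletionSet G R) (v : V) : IsTwin G v (hR.rep v) :=
  (hR v).choose_spec.1.2

theorem eq_rep (hR : IsTwinDeletionSet G R) (hw : w ∈ R) (h : IsTwin G v w) : w = hR.rep v :=
  (hR v).choose_spec.2 w ⟨hw, h⟩

theorem eq_of_isTwin (hR : IsTwinDeletionSet G R) (hu : u ∈ R) (hv : v ∈ R)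
    (h : IsTwin G u v) : u = v := by
  rw [hR.eq_rep hu (IsTwin.refl G u), hR.eq_rep hv h]

noncomputable def inducedIso (hR : IsTwinDeletionSet G R) (hR' : IsTwinDeletionSet G R') :
    G.induce R ≃g G.induce R' where
  toFun r := ⟨hR'.rep r, hR'.rep_mem r⟩
  invFun r := ⟨hR.rep r, hR.rep_mem r⟩
  left_inv := fun ⟨r, hr⟩ => Subtype.ext (hR.eq_rep hr (hR'.isTwin_rep r).symm).symm
  right_inv := fun ⟨r, hr⟩ => Subtype.ext (hR'.eq_rep hr (hR.isTwin_rep r).symm).symm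
  map_rel_iff' := by
    rintro ⟨r, hr⟩ ⟨s, hs⟩
    change G.Adj (hR'.rep r) (hR'.rep s) ↔ G.Adj r s
    by_cases hrs : IsTwin G r s
    · obtain rfl := hR.eq_of_isTwin hr hs hrs
      simp only [SimpleGraph.irrefl]
    · exact (IsTwin.adj_congr (hR'.isTwin_rep r) (hR'.isTwin_rep s) hrs).symm

end IsTwinDeletionSet

theorem Sym2.map_surjective {α β : Type*} {f : α → β} (hf : Function.Surjective f) :
    Function.Surjective (Sym2.map f) := by
  intro e
  induction e using Sym2.ind with
  | _ a b =>
    obtain ⟨a, rfl⟩ := hf a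
    obtain ⟨b, rfl⟩ := hf b
    exact ⟨s(a, b), rfl⟩

namespace SimpleGraph.Iso

variable {G' : SimpleGraph W}

theorem image_closedNbhd (f : G ≃g G') (v : V) : f '' closedNbhd G v = closedNbhd G' (f v) := by
  rw [closedNbhd, Set.image_insert_eq, f.image_neighborSet, closedNbhd]

theorem image_edgeNbhd (f : G ≃g G') (e : Sym2 V) :
    f '' edgeNbhd G e = edgeNbhd G' (e.map f) := by
  induction e using Sym2.ind with
  | _ a b =>
    simp only [edgeNbhd, Sym2.lift_mk, Sym2.map_mk, Set.image_union, image_closedNbhd]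

theorem twinEdges_map_iff (f : G ≃g G') {e₁ e₂ : Sym2 V} :
    TwinEdges G' (e₁.map f) (e₂.map f) ↔ TwinEdges G e₁ e₂ := by
  rw [TwinEdges, TwinEdges, ← image_edgeNbhd, ← image_edgeNbhd]
  exact Set.image_eq_image f.injective

theorem image_nontrivTwinEdges (f : G ≃g G') :
    Sym2.map f '' nontrivTwinEdges G = nontrivTwinEdges G' := by
  have hmap := Sym2.map.injective f.injective
  ext e'
  obtain ⟨e, rfl⟩ := Sym2.map_surjective f.surjective e'
  simp only [Set.mem_image, hmap.eq_iff, exists_eq_right, nontrivTwinEdges, Set.mem_ofPred_eq,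
    f.map_mem_edgeSet_iff]
  constructor
  · rintro ⟨he, e₂, he₂, hne, htw⟩
    exact ⟨he, e₂.map f, f.map_mem_edgeSet_iff.mpr he₂, hmap.ne hne,
      f.twinEdges_map_iff.mpr htw⟩
  · rintro ⟨he, e₂', he₂', hne, htw⟩
    obtain ⟨e₂, rfl⟩ := Sym2.map_surjective f.surjective e₂'
    exact ⟨he, e₂, f.map_mem_edgeSet_iff.mp he₂', fun h => hne (congrArg (Sym2.map f) h),
      f.twinEdges_map_iff.mp htw⟩

theorem qval_eq (f : G ≃g G') : qval G = qval G' := by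
  rw [qval, qval, ← f.image_nontrivTwinEdges,
    Set.ncard_image_of_injective _ (Sym2.map.injective f.injective)]

theorem q'val_eq (f : G ≃g G') : q'val G = q'val G' := by
  have hclasses : edgeNbhd G' '' nontrivTwinEdges G' =
      Set.image f '' (edgeNbhd G '' nontrivTwinEdges G) := by
    simp only [← f.image_nontrivTwinEdges, Set.image_image, image_edgeNbhd]
  rw [q'val, q'val, f.qval_eq, hclasses,
    Set.ncard_image_of_injective _ (Set.image_injective.mpr f.injective)]

end SimpleGraph.Iso

theorem q_invariant_under_twin_deletion {V : Type*} (G : SimpleGraph V)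
    (R R' : Set V) (hR : IsTwinDeletionSet G R) (hR' : IsTwinDeletionSet G R') :
    qval (G.induce R) = qval (G.induce R') ∧
    q'val (G.induce R) = q'val (G.induce R') :=
  ⟨(hR.inducedIso hR').qval_eq, (hR.inducedIso hR').q'val_eq⟩
end
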